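/- arXiv:2603.24640 — 3 statements merged into one kernel-verified Lean document; each statement's English description precedes it below -/
import Mathlib

section
/- Let n ≥ 1. Let s, ρ : ℝ → ℝ satisfy, on (0,∞): 0 < s(a) ≤ 1 and s antitone; ρ(a) ≥ 0 and ρ antitone. Let g : ℝ → ℝ satisfy 0 < g(t) < 1 for every t > 0, g antitone on (0,∞) and log∘g convex on (0,∞). Let α : Fin n → ℝ be a positive nondecreasing tuple, and let v, u : Fin n → ℝ be positive nondecreasing tuples with Σ_{i=1}^k v i ≤ Σ_{i=1}^k u i for every k = 1,…,n. Then Σ_{i=1}^n g(v i)·s(α i)·ρ(α i)/(1 − g(v i)·s(α i)) ≥ Σ_{i=1}^n g(u i)·s(α i)·ρ(α i)/(1 − g(u i)·s(α i)). -/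
open Finset

/-- Sum of the first `k` entries of the tuple `a`. -/
noncomputable def prefixSum {n : ℕ} (a : Fin n → ℝ) (k : ℕ) : ℝ :=
  ∑ i ∈ Finset.univ.filter (fun i : Fin n => (i : ℕ) < k), a i

/-!
Write the `i`-th summand as `fᵢ = φᵢ ∘ g` with `φᵢ x = x Pᵢ Rᵢ / (1 - x Pᵢ)`, `Pᵢ = s (α i)`,
`Rᵢ = ρ (α i)`. Since `g` is log-convex it is convex, and `φᵢ` is convex and increasing, so `fᵢ`
is convex; it is decreasing because `g` is. As `Pᵢ` and `Rᵢ` decrease in `i`, the increment of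
`fᵢ` over a fixed interval increases with `i`. Together with convexity and the monotonicity of
`u` and `v`, this makes the secant slopes `mᵢ` of `fᵢ` between `uᵢ` and `vᵢ` nonpositive and
nondecreasing in `i`. Then `∑ (fᵢ vᵢ - fᵢ uᵢ) = ∑ mᵢ (vᵢ - uᵢ) ≥ 0` by Abel summation, the
partial sums of `v - u` being nonpositive.
-/

open Set

theorem ConvexOn.comp_of_mapsTo {𝕜 E α β : Type*} [Semiring 𝕜] [PartialOrder 𝕜]
    [AddCommMonoid E] [AddCommMonoid α] [PartialOrder α] [AddCommMonoid β] [PartialOrder β]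
    [SMul 𝕜 E] [SMul 𝕜 α] [SMul 𝕜 β] {s : Set E} {t : Set β} {f : E → β} {g : β → α}
    (hg : ConvexOn 𝕜 t g) (hf : ConvexOn 𝕜 s f) (hg' : MonotoneOn g t) (hst : MapsTo f s t) :
    ConvexOn 𝕜 s (g ∘ f) :=
  ⟨hf.1, fun _ hx _ hy _ _ ha hb hab =>
    (hg' (hst (hf.1 hx hy ha hb hab)) (hg.1 (hst hx) (hst hy) ha hb hab)
      (hf.2 hx hy ha hb hab)).trans (hg.2 (hst hx) (hst hy) ha hb hab)⟩

theorem ConvexOn.of_log {E : Type*} [AddCommGroup E] [Module ℝ E] {s : Set E} {g : E → ℝ}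
    (hpos : ∀ x ∈ s, 0 < g x) (hlog : ConvexOn ℝ s fun x => Real.log (g x)) :
    ConvexOn ℝ s g :=
  (convexOn_exp.comp_of_mapsTo hlog (Real.exp_monotone.monotoneOn _) (mapsTo_univ _ _)).congr
    fun x hx => Real.exp_log (hpos x hx)

section slope

variable {𝕜 : Type*} [Field 𝕜] [LinearOrder 𝕜]

theorem slope_min_max (f : 𝕜 → 𝕜) (a b : 𝕜) : slope f a b = slope f (min a b) (max a b) := by
  rcases le_total a b with h | h
  · rw [min_eq_left h, max_eq_right h]
  · rw [min_eq_right h, max_eq_left h, slope_comm]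

variable [IsStrictOrderedRing 𝕜]

theorem ConvexOn.slope_le_slope {s : Set 𝕜} {f : 𝕜 → 𝕜} (hf : ConvexOn 𝕜 s f) {a b c d : 𝕜}
    (ha : a ∈ s) (hb : b ∈ s) (hc : c ∈ s) (hd : d ∈ s) (hab : a < b) (hcd : c < d)
    (hac : a ≤ c) (hbd : b ≤ d) : slope f a b ≤ slope f c d :=
  calc slope f a b ≤ slope f a d :=
        hf.slope_mono ha ⟨hb, hab.ne'⟩ ⟨hd, (hab.trans_le hbd).ne'⟩ hbd
    _ = slope f d a := slope_comm f a d
    _ ≤ slope f d c := hf.slope_mono hd ⟨ha, (hab.trans_le hbd).ne⟩ ⟨hc, hcd.ne⟩ hac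
    _ = slope f c d := slope_comm f d c

theorem slope_le_slope_of_sub_le_sub {f g : 𝕜 → 𝕜} {a b : 𝕜} (hab : a ≤ b)
    (h : f b - f a ≤ g b - g a) : slope f a b ≤ slope g a b := by
  simp only [slope_def_field]
  exact div_le_div_of_nonneg_right h (sub_nonneg.2 hab)

end slope

theorem prefixSum_sub {n : ℕ} (a b : Fin n → ℝ) (k : ℕ) :
    prefixSum (a - b) k = prefixSum a k - prefixSum b k := by
  simp only [prefixSum, Pi.sub_apply, sum_sub_distrib]

theorem prefixSum_of_le {n : ℕ} (a : Fin n → ℝ) {k : ℕ} (hk : n ≤ k) :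
    prefixSum a k = ∑ i, a i := by
  rw [prefixSum, filter_true_of_mem fun i _ => i.isLt.trans_le hk]

theorem prefixSum_castSucc {n : ℕ} (a : Fin (n + 1) → ℝ) {k : ℕ} (hk : k ≤ n) :
    prefixSum (fun i => a i.castSucc) k = prefixSum a k := by
  simp only [prefixSum, sum_filter, Fin.sum_univ_castSucc, Fin.val_castSucc, Fin.val_last,
    if_neg (not_lt.2 hk), add_zero]

theorem sum_mul_nonneg_of_prefixSum_nonpos {n : ℕ} (m d : Fin n → ℝ)
    (hm_mono : ∀ i j, i ≤ j → d i ≠ 0 → d j ≠ 0 → m i ≤ m j)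
    (hm_nonpos : ∀ i, d i ≠ 0 → m i ≤ 0)
    (hd : ∀ k, 1 ≤ k → k ≤ n → prefixSum d k ≤ 0) :
    0 ≤ ∑ i, m i * d i := by
  induction n with
  | zero => simp
  | succ n ih =>
    have hd_init : ∀ k, 1 ≤ k → k ≤ n → prefixSum (fun i => d i.castSucc) k ≤ 0 :=
      fun k hk hkn => (prefixSum_castSucc d hkn).symm ▸ hd k hk (hkn.trans n.le_succ)
    by_cases hlast : d (Fin.last n) = 0
    · rw [Fin.sum_univ_castSucc, hlast, mul_zero, add_zero]
      exact ih _ _ (fun i j hij => hm_mono _ _ hij) (fun i => hm_nonpos _) hd_init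
    -- Subtracting `m (last n)` from every `m i` kills the last term and keeps the hypotheses.
    have hsplit : ∑ i, m i * d i
        = ∑ i, (m i - m (Fin.last n)) * d i + m (Fin.last n) * ∑ i, d i := by
      rw [mul_sum, ← sum_add_distrib]
      exact sum_congr rfl fun i _ => by ring
    have hhead : 0 ≤ ∑ i, (m i - m (Fin.last n)) * d i := by
      rw [Fin.sum_univ_castSucc, sub_self, zero_mul, add_zero]
      refine ih _ _ (fun i j hij hi hj => sub_le_sub_right (hm_mono _ _ hij hi hj) _)
        (fun i hi => sub_nonpos.2 (hm_mono _ _ (Fin.le_last _) hi hlast)) hd_init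
    have htail : 0 ≤ m (Fin.last n) * ∑ i, d i :=
      mul_nonneg_of_nonpos_of_nonpos (hm_nonpos _ hlast)
        (prefixSum_of_le d le_rfl ▸ hd (n + 1) n.succ_pos le_rfl)
    linarith

theorem sum_le_sum_of_prefixSum_le {n : ℕ} {S : Set ℝ} (f : Fin n → ℝ → ℝ)
    (hf_conv : ∀ i, ConvexOn ℝ S (f i)) (hf_anti : ∀ i, AntitoneOn (f i) S)
    (hf_incr : ∀ i j, i ≤ j → ∀ a ∈ S, ∀ b ∈ S, a ≤ b → f i b - f i a ≤ f j b - f j a)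
    {v u : Fin n → ℝ} (hv : ∀ i, v i ∈ S) (hu : ∀ i, u i ∈ S)
    (hvm : Monotone v) (hum : Monotone u)
    (hmaj : ∀ k, 1 ≤ k → k ≤ n → prefixSum v k ≤ prefixSum u k) :
    ∑ i, f i (u i) ≤ ∑ i, f i (v i) := by
  set m : Fin n → ℝ := fun i => slope (f i) (u i) (v i)
  have hdiff : ∑ i, f i (v i) - ∑ i, f i (u i) = ∑ i, m i * (v - u) i := by
    rw [← sum_sub_distrib]
    exact sum_congr rfl fun i _ => by
      rw [mul_comm, ← smul_eq_mul, Pi.sub_apply, sub_smul_slope, vsub_eq_sub]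
  have hmin : ∀ i, min (u i) (v i) ∈ S := fun i => by
    rcases min_choice (u i) (v i) with h | h <;> rw [h]; exacts [hu i, hv i]
  have hmax : ∀ i, max (u i) (v i) ∈ S := fun i => by
    rcases max_choice (u i) (v i) with h | h <;> rw [h]; exacts [hu i, hv i]
  have hm_mono : ∀ i j, i ≤ j → (v - u) i ≠ 0 → (v - u) j ≠ 0 → m i ≤ m j := by
    intro i j hij hi hj
    have hlt : ∀ k, (v - u) k ≠ 0 → min (u k) (v k) < max (u k) (v k) := fun k hk =>
      min_lt_max.2 fun h => hk (sub_eq_zero.2 h.symm)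
    simp only [m, slope_min_max (f _) (u _)]
    calc slope (f i) (min (u i) (v i)) (max (u i) (v i))
        ≤ slope (f j) (min (u i) (v i)) (max (u i) (v i)) :=
          slope_le_slope_of_sub_le_sub (hlt i hi).le
            (hf_incr i j hij _ (hmin i) _ (hmax i) (hlt i hi).le)
      _ ≤ slope (f j) (min (u j) (v j)) (max (u j) (v j)) :=
          (hf_conv j).slope_le_slope (hmin i) (hmax i) (hmin j) (hmax j) (hlt i hi) (hlt j hj)
            (min_le_min (hum hij) (hvm hij)) (max_le_max (hum hij) (hvm hij))
  have hm_nonpos : ∀ i, (v - u) i ≠ 0 → m i ≤ 0 := fun i _ =>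
    (hf_anti i).slope_nonpos (hu i) (hv i)
  have hd : ∀ k, 1 ≤ k → k ≤ n → prefixSum (v - u) k ≤ 0 := fun k hk hkn => by
    rw [prefixSum_sub]; exact sub_nonpos.2 (hmaj k hk hkn)
  have := sum_mul_nonneg_of_prefixSum_nonpos m (v - u) hm_mono hm_nonpos hd
  linarith

/-- `rhTerm P R p` is the term `p F̄ r / (1 - p F̄)` of the reversed hazard rate of the largest
claim, with `F̄ = P` and `r = R`. -/
noncomputable def rhTerm (P R p : ℝ) : ℝ := p * P * R / (1 - p * P)

section rhTerm

variable {P R : ℝ}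

theorem mul_lt_one_of_lt_inv {x : ℝ} (hP : 0 < P) (hx : x < P⁻¹) : x * P < 1 :=
  (lt_inv_mul_iff₀' hP).1 (by rwa [mul_one])

theorem rhTerm_eq {x : ℝ} (hx : x * P < 1) : rhTerm P R x = R * (1 - x * P)⁻¹ - R := by
  have : 1 - x * P ≠ 0 := by linarith
  rw [rhTerm]; field_simp; ring

theorem rhTerm_sub_rhTerm {x y : ℝ} (hx : x * P < 1) (hy : y * P < 1) :
    rhTerm P R y - rhTerm P R x = P * R * (y - x) / ((1 - x * P) * (1 - y * P)) := by
  have hx0 : 1 - x * P ≠ 0 := by linarith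
  have hy0 : 1 - y * P ≠ 0 := by linarith
  rw [rhTerm, rhTerm, div_sub_div _ _ hy0 hx0]
  congr 1 <;> ring

theorem monotoneOn_rhTerm (hP : 0 < P) (hR : 0 ≤ R) : MonotoneOn (rhTerm P R) (Iio P⁻¹) := by
  intro x hx y hy hxy
  have hx' := mul_lt_one_of_lt_inv hP hx
  have hy' := mul_lt_one_of_lt_inv hP hy
  rw [rhTerm_eq hx', rhTerm_eq hy']
  gcongr

theorem convexOn_rhTerm (hP : 0 < P) (hR : 0 ≤ R) : ConvexOn ℝ (Iio P⁻¹) (rhTerm P R) := by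
  refine ⟨convex_Iio _, fun x hx y hy a b ha hb hab => ?_⟩
  have hx' := mul_lt_one_of_lt_inv hP hx
  have hy' := mul_lt_one_of_lt_inv hP hy
  have hz' := mul_lt_one_of_lt_inv hP ((convex_Iio _) hx hy ha hb hab)
  have hinv := (convexOn_zpow (𝕜 := ℝ) (-1)).2 (mem_Ioi.2 (sub_pos.2 hx'))
    (mem_Ioi.2 (sub_pos.2 hy')) ha hb hab
  have haff : a * (1 - x * P) + b * (1 - y * P) = 1 - (a * x + b * y) * P := by
    linear_combination hab
  rw [rhTerm_eq hx', rhTerm_eq hy', rhTerm_eq hz']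
  simp only [zpow_neg_one, smul_eq_mul] at hinv ⊢
  rw [haff] at hinv
  nlinarith [mul_le_mul_of_nonneg_left hinv hR]

theorem rhTerm_sub_le_rhTerm_sub {P' R' x y : ℝ} (hP : 0 ≤ P) (hPP' : P ≤ P')
    (hR : 0 ≤ R) (hRR' : R ≤ R') (hx : 0 ≤ x) (hxy : x ≤ y) (hy : y * P' < 1) :
    rhTerm P R y - rhTerm P R x ≤ rhTerm P' R' y - rhTerm P' R' x := by
  have hyP : y * P ≤ y * P' := mul_le_mul_of_nonneg_left hPP' (hx.trans hxy)
  have hxP : x * P ≤ x * P' := mul_le_mul_of_nonneg_left hPP' hx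
  have hxP' : x * P' ≤ y * P' := mul_le_mul_of_nonneg_right hxy (hP.trans hPP')
  rw [rhTerm_sub_rhTerm (by linarith) (by linarith), rhTerm_sub_rhTerm (by linarith) hy]
  refine div_le_div₀ ?_ ?_ ?_ ?_
  · exact mul_nonneg (mul_nonneg (hP.trans hPP') (hR.trans hRR')) (sub_nonneg.2 hxy)
  · gcongr; linarith
  · exact mul_pos (by linarith) (by linarith)
  · exact mul_le_mul (by linarith) (by linarith) (by linarith) (by linarith)

theorem stmt_13_general {n : ℕ} (s ρ g : ℝ → ℝ)
    (hs_pos : ∀ a > 0, 0 < s a) (hs_le : ∀ a > 0, s a ≤ 1)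
    (hs_anti : AntitoneOn s (Set.Ioi 0))
    (hρ_nonneg : ∀ a > 0, 0 ≤ ρ a)
    (hρ_anti : AntitoneOn ρ (Set.Ioi 0))
    (hg : ∀ t > 0, 0 < g t ∧ g t < 1)
    (hg_anti : AntitoneOn g (Set.Ioi 0))
    (hg_logconv : ConvexOn ℝ (Set.Ioi 0) (fun t => Real.log (g t)))
    (α v u : Fin n → ℝ)
    (hα : ∀ i, 0 < α i) (hαm : Monotone α)
    (hv : ∀ i, 0 < v i) (hu : ∀ i, 0 < u i)
    (hvm : Monotone v) (hum : Monotone u)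
    (hmaj : ∀ k, 1 ≤ k → k ≤ n → prefixSum v k ≤ prefixSum u k) :
    ∑ i, g (u i) * s (α i) * ρ (α i) / (1 - g (u i) * s (α i)) ≤
      ∑ i, g (v i) * s (α i) * ρ (α i) / (1 - g (v i) * s (α i)) := by
  have hP i : 0 < s (α i) := hs_pos _ (hα i)
  have hR i : 0 ≤ ρ (α i) := hρ_nonneg _ (hα i)
  have hg_maps i : MapsTo g (Ioi 0) (Iio (s (α i))⁻¹) := fun t ht =>
    (hg t ht).2.trans_le ((one_le_inv₀ (hP i)).2 (hs_le _ (hα i)))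
  have hg_conv : ConvexOn ℝ (Ioi 0) g := .of_log (fun t ht => (hg t ht).1) hg_logconv
  refine sum_le_sum_of_prefixSum_le (fun i => rhTerm (s (α i)) (ρ (α i)) ∘ g)
    (fun i => (convexOn_rhTerm (hP i) (hR i)).comp_of_mapsTo hg_conv
      (monotoneOn_rhTerm (hP i) (hR i)) (hg_maps i))
    (fun i => (monotoneOn_rhTerm (hP i) (hR i)).comp_AntitoneOn hg_anti (hg_maps i))
    (fun i j hij a ha b hb hab => ?_) hv hu hvm hum hmaj
  have hα_ij : α i ≤ α j := hαm hij
  have := rhTerm_sub_le_rhTerm_sub (hP j).le (hs_anti (hα i) (hα j) hα_ij) (hR j)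
    (hρ_anti (hα i) (hα j) hα_ij) (hg b hb).1.le (hg_anti ha hb hab)
    (mul_lt_one_of_lt_inv (hP i) (hg_maps i ha))
  simp only [Function.comp_apply]
  linarith

/-- Theorem 3.12: largest claim amounts, reversed hazard rate order,
weak supermajorization of the transformed occurrence probabilities. -/
theorem stmt_13 {n : ℕ} (hn : 1 ≤ n) (s ρ g : ℝ → ℝ)
    (hs_pos : ∀ a > 0, 0 < s a) (hs_le : ∀ a > 0, s a ≤ 1)
    (hs_anti : AntitoneOn s (Set.Ioi 0))
    (hρ_nonneg : ∀ a > 0, 0 ≤ ρ a)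
    (hρ_anti : AntitoneOn ρ (Set.Ioi 0))
    (hg : ∀ t > 0, 0 < g t ∧ g t < 1)
    (hg_anti : AntitoneOn g (Set.Ioi 0))
    (hg_logconv : ConvexOn ℝ (Set.Ioi 0) (fun t => Real.log (g t)))
    (α v u : Fin n → ℝ)
    (hα : ∀ i, 0 < α i) (hαm : Monotone α)
    (hv : ∀ i, 0 < v i) (hu : ∀ i, 0 < u i)
    (hvm : Monotone v) (hum : Monotone u)
    (hmaj : ∀ k, 1 ≤ k → k ≤ n → prefixSum v k ≤ prefixSum u k) :
    ∑ i, g (u i) * s (α i) * ρ (α i) / (1 - g (u i) * s (α i)) ≤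
      ∑ i, g (v i) * s (α i) * ρ (α i) / (1 - g (v i) * s (α i)) :=
  stmt_13_general s ρ g hs_pos hs_le hs_anti hρ_nonneg hρ_anti hg hg_anti hg_logconv α v u hα hαm hv
    hu hvm hum hmaj
end rhTerm
end

section
/- Let n ≥ 1. Let p : Fin n → ℝ with 0 < p i < 1 for all i. Let s : ℝ → ℝ satisfy 0 < s(a) ≤ 1 for every a > 0 and log∘s convex on (0,∞), and let ρ : ℝ → ℝ be nonnegative and convex on (0,∞). Let α, β : Fin n → ℝ be positive tuples with Σ_{i=1}^n α i = Σ_{i=1}^n β i and, for every k = 1,…,n, the sum of the k smallest entries of α at most the sum of the k smallest entries of β (i.e. α majorizes β). Set B_α = ∏_{i=1}^n p i·s(α i) and B_β = ∏_{i=1}^n p i·s(β i) (both lie in (0,1)). Then B_α·(Σ_{i=1}^n ρ(α i))/(1 − B_α) ≥ B_β·(Σ_{i=1}^n ρ(β i))/(1 − B_β). -/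
/-!
Karamata's inequality: for sorted tuples with the same total and dominated partial sums, a convex
`f` satisfies `∑ f (β i) ≤ ∑ f (α i)`. Applied to `ρ` and to `log ∘ s` it shows that replacing `β`
by `α` increases both `∑ ρ` and `B`, and `t ↦ t / (1 - t)` is increasing on `[0, 1)`.
Karamata itself follows by writing `f (a i) - f (b i) = c i * (a i - b i)` with secant slopes
`c i`, which increase with `i` because `a` and `b` are sorted, and summing by parts.
-/

open Finset

/-- Sum of the `k` smallest entries of the tuple `a`. -/
noncomputable def kSmallestSum {n : ℕ} (a : Fin n → ℝ) (k : ℕ) : ℝ :=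
  ∑ i ∈ Finset.univ.filter (fun i : Fin n => (i : ℕ) < k), a (Tuple.sort a i)

lemma ConvexOn.slope_le_slope_s14 {𝕜 : Type*} [Field 𝕜] [LinearOrder 𝕜] [IsStrictOrderedRing 𝕜]
    {s : Set 𝕜} {f : 𝕜 → 𝕜} (hf : ConvexOn 𝕜 s f) {x₁ y₁ x₂ y₂ : 𝕜}
    (hx₁ : x₁ ∈ s) (hy₁ : y₁ ∈ s) (hx₂ : x₂ ∈ s) (hy₂ : y₂ ∈ s)
    (hx : x₁ ≤ x₂) (hy : y₁ ≤ y₂) (h₁ : x₁ ≠ y₁) (h₂ : x₂ ≠ y₂) :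
    slope f x₁ y₁ ≤ slope f x₂ y₂ := by
  by_cases hyx : y₂ = x₁
  · have hy₁x₂ : y₁ ≠ x₂ := by
      rintro rfl; exact h₁ (le_antisymm hx (hyx ▸ hy))
    calc slope f x₁ y₁ = slope f y₁ x₁ := slope_comm f x₁ y₁
      _ ≤ slope f y₁ x₂ := hf.slope_mono hy₁ ⟨hx₁, h₁⟩ ⟨hx₂, Ne.symm hy₁x₂⟩ hx
      _ = slope f x₂ y₁ := slope_comm f y₁ x₂
      _ ≤ slope f x₂ y₂ := hf.slope_mono hx₂ ⟨hy₁, hy₁x₂⟩ ⟨hy₂, Ne.symm h₂⟩ hy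
  · calc slope f x₁ y₁ ≤ slope f x₁ y₂ := hf.slope_mono hx₁ ⟨hy₁, Ne.symm h₁⟩ ⟨hy₂, hyx⟩ hy
      _ = slope f y₂ x₁ := slope_comm f x₁ y₂
      _ ≤ slope f y₂ x₂ := hf.slope_mono hy₂ ⟨hx₁, Ne.symm hyx⟩ ⟨hx₂, h₂⟩ hx
      _ = slope f x₂ y₂ := slope_comm f y₂ x₂

lemma Monotone.mul_sum_range_le_sum_range_mul {c g : ℕ → ℝ} (hc : Monotone c) {n : ℕ}
    (hg : ∀ k ≤ n, ∑ j ∈ range k, g j ≤ 0) :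
    c n * ∑ j ∈ range n, g j ≤ ∑ i ∈ range n, c i * g i := by
  induction n with
  | zero => simp
  | succ n ih =>
    have hG : ∑ j ∈ range (n + 1), g j ≤ 0 := hg (n + 1) le_rfl
    have ih := ih fun k hk => hg k (hk.trans n.le_succ)
    simp only [sum_range_succ] at hG ⊢
    nlinarith [hc n.le_succ]

theorem ConvexOn.sum_range_le_sum_range_of_majorizes {s : Set ℝ} {f : ℝ → ℝ}
    (hf : ConvexOn ℝ s f) {n : ℕ} {a b : ℕ → ℝ} (has : ∀ i < n, a i ∈ s) (hbs : ∀ i < n, b i ∈ s)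
    (ha : MonotoneOn a (Set.Iio n)) (hb : MonotoneOn b (Set.Iio n))
    (hpart : ∀ k ≤ n, ∑ i ∈ range k, a i ≤ ∑ i ∈ range k, b i)
    (htot : ∑ i ∈ range n, a i = ∑ i ∈ range n, b i) :
    ∑ i ∈ range n, f (b i) ≤ ∑ i ∈ range n, f (a i) := by
  set T : Set ℕ := {i | i < n ∧ b i ≠ a i}
  have hd : MonotoneOn (fun i => slope f (b i) (a i)) T := fun i hi j hj hij =>
    hf.slope_le_slope_s14 (hbs i hi.1) (has i hi.1) (hbs j hj.1) (has j hj.1)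
      (hb hi.1 hj.1 hij) (ha hi.1 hj.1 hij) hi.2 hj.2
  have hT : T.Finite := (Set.finite_lt_nat n).subset fun i hi => hi.1
  -- where `a i = b i` there is no secant; any monotone extension of the slopes will do
  obtain ⟨c, hc, hcd⟩ := hd.exists_monotone_extension (hT.image _).bddBelow (hT.image _).bddAbove
  have hfc : ∀ i < n, f (a i) - f (b i) = c i * (a i - b i) := by
    intro i hi
    by_cases hab : b i = a i
    · simp [hab]
    · rw [← hcd ⟨hi, hab⟩, mul_comm, ← smul_eq_mul, sub_smul_slope, vsub_eq_sub]
  have habel := hc.mul_sum_range_le_sum_range_mul (g := fun i => a i - b i) (n := n)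
    fun k hk => by simpa [sum_sub_distrib] using hpart k hk
  rw [sum_sub_distrib, htot, sub_self, mul_zero,
    ← sum_congr rfl fun i hi => hfc i (mem_range.1 hi), sum_sub_distrib] at habel
  linarith

noncomputable def sortedSeq {n : ℕ} (a : Fin n → ℝ) (i : ℕ) : ℝ :=
  if h : i < n then a (Tuple.sort a ⟨i, h⟩) else 0

section sortedSeq

variable {n : ℕ} (a : Fin n → ℝ)

lemma sortedSeq_of_lt {i : ℕ} (hi : i < n) : sortedSeq a i = a (Tuple.sort a ⟨i, hi⟩) :=
  dif_pos hi

lemma sortedSeq_fin (i : Fin n) : sortedSeq a i = a (Tuple.sort a i) :=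
  sortedSeq_of_lt a i.isLt

lemma monotoneOn_sortedSeq : MonotoneOn (sortedSeq a) (Set.Iio n) := fun i hi j hj hij => by
  rw [sortedSeq_of_lt a hi, sortedSeq_of_lt a hj]
  exact Tuple.monotone_sort a (show (⟨i, hi⟩ : Fin n) ≤ ⟨j, hj⟩ from hij)

lemma sum_range_sortedSeq (f : ℝ → ℝ) : ∑ i ∈ range n, f (sortedSeq a i) = ∑ i, f (a i) := by
  rw [← Fin.sum_univ_eq_sum_range (fun i => f (sortedSeq a i))]
  simp only [sortedSeq_fin]
  exact Equiv.sum_comp (Tuple.sort a) (fun i => f (a i))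

lemma kSmallestSum_eq_sum_range_sortedSeq {k : ℕ} (hk : k ≤ n) :
    kSmallestSum a k = ∑ i ∈ range k, sortedSeq a i := by
  have hrange : range k = (range n).filter (· < k) := by
    ext i; simp only [mem_filter, mem_range]; omega
  rw [kSmallestSum, hrange, sum_filter, sum_filter,
    ← Fin.sum_univ_eq_sum_range (fun i => if i < k then sortedSeq a i else 0)]
  simp only [sortedSeq_fin]

end sortedSeq

theorem ConvexOn.sum_le_sum_of_kSmallestSum_le {s : Set ℝ} {f : ℝ → ℝ} (hf : ConvexOn ℝ s f)
    {n : ℕ} {α β : Fin n → ℝ} (hα : ∀ i, α i ∈ s) (hβ : ∀ i, β i ∈ s)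
    (hsum : ∑ i, α i = ∑ i, β i)
    (hmaj : ∀ k, 1 ≤ k → k ≤ n → kSmallestSum α k ≤ kSmallestSum β k) :
    ∑ i, f (β i) ≤ ∑ i, f (α i) := by
  rw [← sum_range_sortedSeq α, ← sum_range_sortedSeq β]
  refine hf.sum_range_le_sum_range_of_majorizes (fun i hi => ?_) (fun i hi => ?_)
    (monotoneOn_sortedSeq α) (monotoneOn_sortedSeq β) (fun k hk => ?_) ?_
  · rw [sortedSeq_of_lt α hi]; exact hα _
  · rw [sortedSeq_of_lt β hi]; exact hβ _
  · rcases k.eq_zero_or_pos with rfl | hk₀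
    · simp
    · rw [← kSmallestSum_eq_sum_range_sortedSeq α hk, ← kSmallestSum_eq_sum_range_sortedSeq β hk]
      exact hmaj k hk₀ hk
  · exact (sum_range_sortedSeq α id).trans (hsum.trans (sum_range_sortedSeq β id).symm)

lemma mul_div_one_sub_le_mul_div_one_sub {x y u v : ℝ} (hx : 0 ≤ x) (hxy : x ≤ y) (hy : y < 1)
    (hu : 0 ≤ u) (huv : u ≤ v) : x * u / (1 - x) ≤ y * v / (1 - y) := by
  rw [div_le_div_iff₀ (by linarith) (by linarith)]
  have hxy' : x * (1 - y) ≤ y * (1 - x) := by nlinarith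
  calc x * u * (1 - y) = x * (1 - y) * u := by ring
    _ ≤ y * (1 - x) * v := by gcongr; nlinarith
    _ = y * v * (1 - x) := by ring

/-- Theorem 3.14: smallest claim amounts, reversed hazard rate order,
majorized severity parameters. -/
theorem stmt_14 {n : ℕ} (hn : 1 ≤ n) (s ρ : ℝ → ℝ)
    (p : Fin n → ℝ) (hp : ∀ i, 0 < p i ∧ p i < 1)
    (hs_pos : ∀ a > 0, 0 < s a) (hs_le : ∀ a > 0, s a ≤ 1)
    (hs_logconv : ConvexOn ℝ (Set.Ioi 0) (fun a => Real.log (s a)))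
    (hρ_nonneg : ∀ a > 0, 0 ≤ ρ a)
    (hρ_conv : ConvexOn ℝ (Set.Ioi 0) ρ)
    (α β : Fin n → ℝ)
    (hα : ∀ i, 0 < α i) (hβ : ∀ i, 0 < β i)
    (hsum : ∑ i, α i = ∑ i, β i)
    (hmaj : ∀ k, 1 ≤ k → k ≤ n → kSmallestSum α k ≤ kSmallestSum β k) :
    (∏ i, p i * s (β i)) * (∑ i, ρ (β i)) / (1 - ∏ i, p i * s (β i)) ≤
      (∏ i, p i * s (α i)) * (∑ i, ρ (α i)) / (1 - ∏ i, p i * s (α i)) := by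
  have hρ := hρ_conv.sum_le_sum_of_kSmallestSum_le hα hβ hsum hmaj
  have hlog := hs_logconv.sum_le_sum_of_kSmallestSum_le hα hβ hsum hmaj
  have hsβ : ∀ i, 0 < s (β i) := fun i => hs_pos _ (hβ i)
  have hsα : ∀ i, 0 < s (α i) := fun i => hs_pos _ (hα i)
  have hprod : ∏ i, s (β i) ≤ ∏ i, s (α i) := by
    rwa [← Real.log_le_log_iff (prod_pos fun i _ => hsβ i) (prod_pos fun i _ => hsα i),
      Real.log_prod fun i _ => (hsβ i).ne', Real.log_prod fun i _ => (hsα i).ne']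
  have hlt_one : ∏ i, p i * s (α i) < 1 := by
    calc ∏ i, p i * s (α i) < ∏ _i : Fin n, (1 : ℝ) :=
          prod_lt_prod_of_nonempty (fun i _ => mul_pos (hp i).1 (hsα i))
            (fun i _ => mul_lt_one_of_nonneg_of_lt_one_left (hp i).1.le (hp i).2 (hs_le _ (hα i)))
            ⟨⟨0, hn⟩, mem_univ _⟩
      _ = 1 := prod_const_one
  refine mul_div_one_sub_le_mul_div_one_sub (prod_nonneg fun i _ => (mul_pos (hp i).1 (hsβ i)).le)
    ?_ hlt_one (sum_nonneg fun i _ => hρ_nonneg _ (hβ i)) hρ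
  rw [prod_mul_distrib, prod_mul_distrib]
  exact mul_le_mul_of_nonneg_left hprod (prod_nonneg fun i _ => (hp i).1.le)
end

section
/- Let n ≥ 1 and let F₁,…,F_n and G₁,…,G_n be functions ℝ → ℝ that are differentiable and strictly positive everywhere. Let q : {1,…,n} → ℝ be nonnegative with Σ_{m=1}^n q(m) = 1. Assume that for all x ∈ ℝ: (a) for each m = 1,…,n−1, G_m′(x)/G_m(x) ≤ G_{m+1}′(x)/G_{m+1}(x); (b) for each m = 1,…,n−1, F_m(x)/G_m(x) ≤ F_{m+1}(x)/G_{m+1}(x); (c) for each m = 1,…,n, F_m′(x)/F_m(x) ≥ G_m′(x)/G_m(x). Then for all x ∈ ℝ: (Σ_{m=1}^n q(m)·F_m′(x))·(Σ_{m=1}^n q(m)·G_m(x)) ≥ (Σ_{m=1}^n q(m)·G_m′(x))·(Σ_{m=1}^n q(m)·F_m(x)), i.e. the reversed hazard rate of the q-mixture of the F_m dominates that of the q-mixture of the G_m. -/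
/-!
Put `w m = q m G_m(x)`, `r m = G_m'(x)/G_m(x)` and `t m = F_m(x)/G_m(x)`. Then
`∑ q G' = ∑ w r`, `∑ q F = ∑ w t`, `∑ q G = ∑ w`, and `w r t = q F_m (G_m'/G_m) ≤ q F_m'` by (c).
By (a) and (b) both `r` and `t` increase in `m`, so Chebyshev's sum inequality with weights `w`
gives `(∑ w r)(∑ w t) ≤ (∑ w)(∑ w r t) ≤ (∑ q G)(∑ q F')`.
-/

open Finset

/-- **Weighted Chebyshev sum inequality.** -/
theorem MonovaryOn.sum_mul_sum_le_sum_mul_sum_of_nonneg {ι : Type*} {s : Finset ι}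
    {w f g : ι → ℝ} (hw : ∀ i ∈ s, 0 ≤ w i) (hfg : MonovaryOn f g s) :
    (∑ i ∈ s, w i * f i) * (∑ i ∈ s, w i * g i) ≤
      (∑ i ∈ s, w i) * ∑ i ∈ s, w i * f i * g i := by
  have hdouble : ∑ i ∈ s, ∑ j ∈ s, w i * w j * ((f j - f i) * (g j - g i)) =
      2 * ((∑ i ∈ s, w i) * (∑ i ∈ s, w i * f i * g i) -
        (∑ i ∈ s, w i * f i) * ∑ i ∈ s, w i * g i) := by
    simp only [two_mul, sum_mul_sum, ← sum_sub_distrib]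
    nth_rewrite 3 [sum_comm]
    rw [← sum_add_distrib]
    refine sum_congr rfl fun i _ => ?_
    rw [← sum_add_distrib]
    exact sum_congr rfl fun j _ => by ring
  have hnonneg : 0 ≤ ∑ i ∈ s, ∑ j ∈ s, w i * w j * ((f j - f i) * (g j - g i)) :=
    sum_nonneg fun i hi => sum_nonneg fun j hj =>
      mul_nonneg (mul_nonneg (hw i hi) (hw j hj)) (hfg.sub_mul_sub_nonneg hi hj)
  linarith

theorem monotoneOn_Icc_of_le_add_one {α : Type*} [Preorder α] {f : ℕ → α} {a b : ℕ}
    (hf : ∀ m, a ≤ m → m < b → f m ≤ f (m + 1)) : MonotoneOn f (Set.Icc a b) :=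
  monotoneOn_of_le_add_one Set.ordConnected_Icc fun m _ hm hm1 =>
    hf m hm.1 (Nat.lt_of_succ_le hm1.2)

theorem sum_mul_sum_le_sum_mul_sum_of_monovaryOn_div {ι : Type*} {s : Finset ι}
    {q F G F' G' : ι → ℝ} (hq : ∀ i ∈ s, 0 ≤ q i)
    (hF : ∀ i ∈ s, 0 < F i) (hG : ∀ i ∈ s, 0 < G i)
    (hmono : MonovaryOn (fun i => G' i / G i) (fun i => F i / G i) s)
    (hdom : ∀ i ∈ s, G' i / G i ≤ F' i / F i) :
    (∑ i ∈ s, q i * G' i) * (∑ i ∈ s, q i * F i) ≤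
      (∑ i ∈ s, q i * F' i) * ∑ i ∈ s, q i * G i := by
  have hw : ∀ i ∈ s, 0 ≤ q i * G i := fun i hi => mul_nonneg (hq i hi) (hG i hi).le
  have hG' : ∑ i ∈ s, q i * G' i = ∑ i ∈ s, q i * G i * (G' i / G i) :=
    sum_congr rfl fun i hi => by field_simp [(hG i hi).ne']
  have hF' : ∑ i ∈ s, q i * F i = ∑ i ∈ s, q i * G i * (F i / G i) :=
    sum_congr rfl fun i hi => by field_simp [(hG i hi).ne']
  have hterm : ∀ i ∈ s, q i * G i * (G' i / G i) * (F i / G i) ≤ q i * F' i := by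
    intro i hi
    calc q i * G i * (G' i / G i) * (F i / G i) = q i * F i * (G' i / G i) := by
          field_simp [(hG i hi).ne']
      _ ≤ q i * F i * (F' i / F i) :=
          mul_le_mul_of_nonneg_left (hdom i hi) (mul_nonneg (hq i hi) (hF i hi).le)
      _ = q i * F' i := by field_simp [(hF i hi).ne']
  calc (∑ i ∈ s, q i * G' i) * (∑ i ∈ s, q i * F i)
      ≤ (∑ i ∈ s, q i * G i) * ∑ i ∈ s, q i * G i * (G' i / G i) * (F i / G i) := by
        rw [hG', hF']
        exact hmono.sum_mul_sum_le_sum_mul_sum_of_nonneg hw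
    _ ≤ (∑ i ∈ s, q i * G i) * ∑ i ∈ s, q i * F' i :=
        mul_le_mul_of_nonneg_left (sum_le_sum hterm) (sum_nonneg hw)
    _ = (∑ i ∈ s, q i * F' i) * ∑ i ∈ s, q i * G i := mul_comm _ _

theorem stmt_15_general {n : ℕ} (F G F' G' : ℕ → ℝ → ℝ)
    (hF_pos : ∀ m ∈ Finset.Icc 1 n, ∀ x : ℝ, 0 < F m x)
    (hG_pos : ∀ m ∈ Finset.Icc 1 n, ∀ x : ℝ, 0 < G m x)
    (q : ℕ → ℝ)
    (hq : ∀ m ∈ Finset.Icc 1 n, 0 ≤ q m)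
    (ha : ∀ x : ℝ, ∀ m, 1 ≤ m → m < n →
      G' m x / G m x ≤ G' (m + 1) x / G (m + 1) x)
    (hb : ∀ x : ℝ, ∀ m, 1 ≤ m → m < n →
      F m x / G m x ≤ F (m + 1) x / G (m + 1) x)
    (hc : ∀ x : ℝ, ∀ m ∈ Finset.Icc 1 n, G' m x / G m x ≤ F' m x / F m x) :
    ∀ x : ℝ,
      (∑ m ∈ Finset.Icc 1 n, q m * G' m x) * (∑ m ∈ Finset.Icc 1 n, q m * F m x) ≤
        (∑ m ∈ Finset.Icc 1 n, q m * F' m x) * (∑ m ∈ Finset.Icc 1 n, q m * G m x) := by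
  intro x
  have hmono : MonovaryOn (fun m => G' m x / G m x) (fun m => F m x / G m x)
      (Finset.Icc 1 n : Set ℕ) := by
    rw [coe_Icc]
    exact (monotoneOn_Icc_of_le_add_one (ha x)).monovaryOn (monotoneOn_Icc_of_le_add_one (hb x))
  exact sum_mul_sum_le_sum_mul_sum_of_monovaryOn_div hq (fun m hm => hF_pos m hm x)
    (fun m hm => hG_pos m hm x) hmono (hc x)

/-- Theorem 3.15: preservation of the reversed hazard rate order under
random minima. -/
theorem stmt_15 {n : ℕ} (hn : 1 ≤ n) (F G F' G' : ℕ → ℝ → ℝ)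
    (hF_pos : ∀ m ∈ Finset.Icc 1 n, ∀ x : ℝ, 0 < F m x)
    (hG_pos : ∀ m ∈ Finset.Icc 1 n, ∀ x : ℝ, 0 < G m x)
    (hF' : ∀ m ∈ Finset.Icc 1 n, ∀ x : ℝ, HasDerivAt (F m) (F' m x) x)
    (hG' : ∀ m ∈ Finset.Icc 1 n, ∀ x : ℝ, HasDerivAt (G m) (G' m x) x)
    (q : ℕ → ℝ)
    (hq : ∀ m ∈ Finset.Icc 1 n, 0 ≤ q m)
    (hqsum : ∑ m ∈ Finset.Icc 1 n, q m = 1)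
    (ha : ∀ x : ℝ, ∀ m, 1 ≤ m → m < n →
      G' m x / G m x ≤ G' (m + 1) x / G (m + 1) x)
    (hb : ∀ x : ℝ, ∀ m, 1 ≤ m → m < n →
      F m x / G m x ≤ F (m + 1) x / G (m + 1) x)
    (hc : ∀ x : ℝ, ∀ m ∈ Finset.Icc 1 n, G' m x / G m x ≤ F' m x / F m x) :
    ∀ x : ℝ,
      (∑ m ∈ Finset.Icc 1 n, q m * G' m x) * (∑ m ∈ Finset.Icc 1 n, q m * F m x) ≤
        (∑ m ∈ Finset.Icc 1 n, q m * F' m x) * (∑ m ∈ Finset.Icc 1 n, q m * G m x) :=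
  stmt_15_general F G F' G' hF_pos hG_pos q hq ha hb hc
end
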